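/- Let A and M be Hermitian operators on a finite-dimensional complex inner product space. Let E_0 be the smallest eigenvalue of A, let P be the orthogonal projection onto the E_0-eigenspace of A, of dimension n0, and let Q = 1 − P. Assume every eigenvalue of A other than E_0 is at least E_0 + 1, assume ‖MP‖ ≤ 1/4, and assume that every unit vector φ in the range of Q satisfies ⟨φ, (A − M)φ⟩ ≥ E_0 + 1/2. Then: (i) exactly n0 eigenvalues of A − M, counted with multiplicity, are at most E_0 + 1/4, and all other eigenvalues of A − M are at least E_0 + 1/2; (ii) the smallest eigenvalue of A − M is at least E_0 − 1/2. -/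

import Mathlib

set_option maxHeartbeats 1000000


open Module

/-- The orthogonal projection onto a subspace, viewed as an operator on the whole space. -/
noncomputable def projOp {E : Type*} [NormedAddCommGroup E] [InnerProductSpace ℂ E]
    (K : Submodule ℂ E) [K.HasOrthogonalProjection] : E →ₗ[ℂ] E :=
  K.subtype ∘ₗ K.orthogonalProjectionOnto.toLinearMap

/-- Operator norm of a linear operator on a finite-dimensional complex inner product space. -/
noncomputable def lmOpNorm {E : Type*} [NormedAddCommGroup E] [InnerProductSpace ℂ E]
    [FiniteDimensional ℂ E] (T : E →ₗ[ℂ] E) : ℝ :=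
  ‖LinearMap.toContinuousLinearMap T‖

section Helpers

variable {E : Type*} [NormedAddCommGroup E] [InnerProductSpace ℂ E] [FiniteDimensional ℂ E]
  {n : ℕ}

local notation "⟪" x ", " y "⟫" => @inner ℂ _ _ x y

omit [FiniteDimensional ℂ E] in
lemma conj_mul_self' (x y : E) : ⟪y, x⟫ * ⟪x, y⟫ = ((‖⟪x, y⟫‖ ^ 2 : ℝ) : ℂ) := by
  rw [← inner_conj_symm y x, mul_comm, Complex.mul_conj,
    Complex.sq_norm]

/-- Spectral expansion of the quadratic form. -/
lemma spec_sum (T : E →ₗ[ℂ] E) (hT : T.IsSymmetric) (hn : finrank ℂ E = n) (φ : E) :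
    (⟪φ, T φ⟫).re = ∑ i, hT.eigenvalues hn i * ‖⟪hT.eigenvectorBasis hn i, φ⟫‖ ^ 2 := by
  set b := hT.eigenvectorBasis hn
  have h1 : ∑ i, ⟪φ, b i⟫ * ⟪b i, T φ⟫ = ⟪φ, T φ⟫ := b.sum_inner_mul_inner φ (T φ)
  have h2 : ∀ i, ⟪b i, T φ⟫ = (hT.eigenvalues hn i : ℂ) * ⟪b i, φ⟫ := by
    intro i
    have := hT.eigenvectorBasis_apply_self_apply hn φ i
    rwa [b.repr_apply_apply, b.repr_apply_apply] at this
  rw [← h1, Complex.re_sum]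
  congr 1
  ext i
  rw [h2 i, mul_comm ((hT.eigenvalues hn i : ℂ)), ← mul_assoc, conj_mul_self', ← Complex.ofReal_mul]
  rw [Complex.ofReal_re]
  exact mul_comm _ _

omit [FiniteDimensional ℂ E] in
/-- Parseval. -/
lemma parseval' (b : OrthonormalBasis (Fin n) ℂ E) (φ : E) :
    ‖φ‖ ^ 2 = ∑ i, ‖⟪b i, φ⟫‖ ^ 2 := by
  have h1 : ∑ i, ⟪φ, b i⟫ * ⟪b i, φ⟫ = ⟪φ, φ⟫ := b.sum_inner_mul_inner φ φ
  simp only [conj_mul_self'] at h1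
  rw [inner_self_eq_norm_sq_to_K] at h1
  have h2 := congrArg Complex.re h1
  simpa [← Complex.ofReal_pow, Complex.re_sum] using h2.symm

omit [FiniteDimensional ℂ E] in
lemma support_span (b : OrthonormalBasis (Fin n) ℂ E) (I : Finset (Fin n)) {φ : E}
    (hφ : φ ∈ Submodule.span ℂ (b '' I)) {j : Fin n} (hj : j ∉ I) : ⟪b j, φ⟫ = 0 := by
  induction hφ using Submodule.span_induction with
  | mem x hx =>
    obtain ⟨i, hi, rfl⟩ := hx
    exact b.orthonormal.2 (fun h => hj (h ▸ hi))
  | zero => exact inner_zero_right _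
  | add x y _ _ hx hy => rw [inner_add_right, hx, hy, add_zero]
  | smul a x _ hx => rw [inner_smul_right, hx, mul_zero]

omit [FiniteDimensional ℂ E] in
lemma dim_span (b : OrthonormalBasis (Fin n) ℂ E) (I : Finset (Fin n)) :
    finrank ℂ (Submodule.span ℂ (b '' I)) = I.card := by
  classical
  have hli := b.orthonormal.linearIndependent
  have hinj : Function.Injective b := hli.injective
  have hco : (↑(I.image b) : Set E) = b '' ↑I := Finset.coe_image
  rw [← hco, finrank_span_finset_eq_card
    (((linearIndepOn_id_range_iff hinj).mpr hli).mono (by intro x hx; obtain ⟨i, -, rfl⟩ := Finset.mem_image.mp hx; exact Set.mem_range_self i)),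
    Finset.card_image_of_injective _ hinj]

lemma rayleigh_le (T : E →ₗ[ℂ] E) (hT : T.IsSymmetric) (hn : finrank ℂ E = n)
    (I : Finset (Fin n)) (c : ℝ) (hc : ∀ i ∈ I, hT.eigenvalues hn i ≤ c)
    {φ : E} (hφ : φ ∈ Submodule.span ℂ (hT.eigenvectorBasis hn '' I)) :
    (⟪φ, T φ⟫).re ≤ c * ‖φ‖ ^ 2 := by
  rw [spec_sum T hT hn φ, parseval' (hT.eigenvectorBasis hn) φ, Finset.mul_sum]
  apply Finset.sum_le_sum
  intro i _
  by_cases hi : i ∈ I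
  · exact mul_le_mul_of_nonneg_right (hc i hi) (by positivity)
  · rw [support_span _ I hφ hi]; simp

lemma rayleigh_ge (T : E →ₗ[ℂ] E) (hT : T.IsSymmetric) (hn : finrank ℂ E = n)
    (I : Finset (Fin n)) (c : ℝ) (hc : ∀ i ∈ I, c ≤ hT.eigenvalues hn i)
    {φ : E} (hφ : φ ∈ Submodule.span ℂ (hT.eigenvectorBasis hn '' I)) :
    c * ‖φ‖ ^ 2 ≤ (⟪φ, T φ⟫).re := by
  rw [spec_sum T hT hn φ, parseval' (hT.eigenvectorBasis hn) φ, Finset.mul_sum]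
  apply Finset.sum_le_sum
  intro i _
  by_cases hi : i ∈ I
  · exact mul_le_mul_of_nonneg_right (hc i hi) (by positivity)
  · rw [support_span _ I hφ hi]; simp

lemma dim_add_le_of_inf_bot (S W : Submodule ℂ E) (h : S ⊓ W = ⊥) :
    finrank ℂ S + finrank ℂ W ≤ finrank ℂ E := by
  have h2 := Submodule.finrank_sup_add_finrank_inf_eq S W
  rw [h] at h2
  simp only [finrank_bot, add_zero] at h2
  rw [← h2]
  exact Submodule.finrank_le _

omit [FiniteDimensional ℂ E] in
lemma unit_of_ne_zero {φ : E} (hφ : φ ≠ 0) : ‖(((‖φ‖ : ℂ))⁻¹ • φ)‖ = 1 := by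
  have h : ‖((‖φ‖ : ℂ))‖ = ‖φ‖ := by
    simp [abs_of_nonneg (norm_nonneg φ)]
  rw [norm_smul, norm_inv, h, inv_mul_cancel₀ (norm_ne_zero_iff.mpr hφ)]

omit [FiniteDimensional ℂ E] in
lemma inner_self_re (p : E) : (⟪p, p⟫).re = ‖p‖ ^ 2 := by
  rw [inner_self_eq_norm_sq_to_K]; norm_cast

end Helpers

/-- For Hermitian `A`, `M` with `A` having smallest eigenvalue `E0`,
spectral gap at least `1`, `‖MP‖ ≤ 1/4` where `P` projects onto the `E0`-eigenspace
(of dimension `n0`), and `⟨φ,(A−M)φ⟩ ≥ E0 + 1/2` for all unit `φ` in the range of `Q = 1−P`: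
(i) exactly `n0` eigenvalues of `A − M` (with multiplicity) are at most `E0 + 1/4` and all
others are at least `E0 + 1/2`; (ii) all eigenvalues of `A − M` are at least `E0 − 1/2`. -/
theorem perturbed_spectrum_split
    {E : Type*} [NormedAddCommGroup E] [InnerProductSpace ℂ E] [FiniteDimensional ℂ E]
    {n : ℕ} (hn : Module.finrank ℂ E = n)
    (A M : E →ₗ[ℂ] E) (hA : A.IsSymmetric) (hM : M.IsSymmetric)
    (hAM : (A - M).IsSymmetric)
    (E0 : ℝ)
    (hE0mem : ∃ i, hA.eigenvalues hn i = E0)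
    (hgap : ∀ i, hA.eigenvalues hn i = E0 ∨ E0 + 1 ≤ hA.eigenvalues hn i)
    (n0 : ℕ)
    (hn0 : Module.finrank ℂ (Module.End.eigenspace A (E0 : ℂ)) = n0)
    (hMP : lmOpNorm (M ∘ₗ projOp (Module.End.eigenspace A (E0 : ℂ))) ≤ 1/4)
    (hQ : ∀ φ : E, φ ∈ (Module.End.eigenspace A (E0 : ℂ))ᗮ → ‖φ‖ = 1 →
      E0 + 1/2 ≤ (inner ℂ φ ((A - M) φ) : ℂ).re) :
    (Finset.univ.filter fun i => hAM.eigenvalues hn i ≤ E0 + 1/4).card = n0 ∧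
      (∀ i, hAM.eigenvalues hn i ≤ E0 + 1/4 ∨ E0 + 1/2 ≤ hAM.eigenvalues hn i) ∧
      ∀ i, E0 - 1/2 ≤ hAM.eigenvalues hn i := by
  classical
  set V : Submodule ℂ E := Module.End.eigenspace A (E0 : ℂ) with hV
  set b := hAM.eigenvectorBasis hn with hb
  set μ := hAM.eigenvalues hn with hμ
  -- norm bound for M on V
  have hMp : ∀ p ∈ V, ‖M p‖ ≤ 1/4 * ‖p‖ := by
    intro p hp
    have hproj : projOp V p = p := by
      simp only [projOp, LinearMap.coe_comp, Function.comp_apply, ContinuousLinearMap.coe_coe,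
        Submodule.coe_subtype]
      exact Submodule.starProjection_eq_self_iff.mpr hp
    have h1 : M p = LinearMap.toContinuousLinearMap (M ∘ₗ projOp V) p := by
      simp [hproj]
    rw [h1]
    calc ‖LinearMap.toContinuousLinearMap (M ∘ₗ projOp V) p‖
        ≤ lmOpNorm (M ∘ₗ projOp V) * ‖p‖ := ContinuousLinearMap.le_opNorm _ p
      _ ≤ 1/4 * ‖p‖ := mul_le_mul_of_nonneg_right hMP (norm_nonneg p)
  -- quadratic form of A - M on V
  have hApV : ∀ p ∈ V, (inner ℂ p ((A - M) p) : ℂ).re = E0 * ‖p‖ ^ 2 - (inner ℂ p (M p) : ℂ).re := by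
    intro p hp
    have hAp : A p = (E0 : ℂ) • p := Module.End.mem_eigenspace_iff.mp hp
    rw [LinearMap.sub_apply, inner_sub_right, hAp, inner_smul_right]
    rw [Complex.sub_re, Complex.re_ofReal_mul, inner_self_re]
  have hMpRe : ∀ p ∈ V, |(inner ℂ p (M p) : ℂ).re| ≤ 1/4 * ‖p‖ ^ 2 := by
    intro p hp
    have h1 : ‖(inner ℂ p (M p) : ℂ)‖ ≤ ‖p‖ * ‖M p‖ := norm_inner_le_norm p (M p)
    have h2 : |(inner ℂ p (M p) : ℂ).re| ≤ ‖(inner ℂ p (M p) : ℂ)‖ := Complex.abs_re_le_norm _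
    have h3 := hMp p hp
    nlinarith [norm_nonneg p, norm_nonneg (M p)]
  have hVup : ∀ p ∈ V, (inner ℂ p ((A - M) p) : ℂ).re ≤ (E0 + 1/4) * ‖p‖ ^ 2 := by
    intro p hp
    have := hApV p hp
    have h2 := abs_le.mp (hMpRe p hp)
    nlinarith
  -- quadratic form lower bound on Vᗮ
  have hQlow : ∀ q ∈ Vᗮ, (E0 + 1/2) * ‖q‖ ^ 2 ≤ (inner ℂ q ((A - M) q) : ℂ).re := by
    intro q hq
    by_cases hq0 : q = 0
    · simp [hq0]
    · set u := ((‖q‖ : ℂ))⁻¹ • q with hu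
      have hu1 : ‖u‖ = 1 := unit_of_ne_zero hq0
      have huO : u ∈ Vᗮ := Submodule.smul_mem _ _ hq
      have h1 := hQ u huO hu1
      have h2 : (inner ℂ u ((A - M) u) : ℂ) =
          ((‖q‖ : ℂ))⁻¹ * (starRingEnd ℂ) ((‖q‖ : ℂ))⁻¹ * (inner ℂ q ((A - M) q) : ℂ) := by
        rw [hu, map_smul, inner_smul_left, inner_smul_right]
        ring
      have hcon : ((‖q‖ : ℂ))⁻¹ * (starRingEnd ℂ) ((‖q‖ : ℂ))⁻¹ = (((‖q‖ ^ 2)⁻¹ : ℝ) : ℂ) := by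
        rw [← Complex.ofReal_inv, Complex.conj_ofReal]
        push_cast
        ring
      rw [h2, hcon, Complex.re_ofReal_mul] at h1
      have hqpos : (0 : ℝ) < ‖q‖ := norm_pos_iff.mpr hq0
      have hq2 : (0 : ℝ) < ‖q‖ ^ 2 := by positivity
      have h4 := mul_le_mul_of_nonneg_left h1 hq2.le
      have h5 : ‖q‖ ^ 2 * ((‖q‖ ^ 2)⁻¹ * (inner ℂ q ((A - M) q) : ℂ).re)
          = (inner ℂ q ((A - M) q) : ℂ).re := by
        field_simp
      rw [h5] at h4
      calc (E0 + 1/2) * ‖q‖ ^ 2 = ‖q‖ ^ 2 * (E0 + 1/2) := mul_comm _ _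
        _ ≤ _ := h4
  -- global lower bound
  have hGlobal : ∀ φ : E, ‖φ‖ = 1 → E0 - 1/2 ≤ (inner ℂ φ ((A - M) φ) : ℂ).re := by
    intro φ hφ1
    set p : E := ↑(V.orthogonalProjectionOnto φ) with hp'
    set q : E := φ - p with hq'
    have hpV : p ∈ V := Submodule.coe_mem _
    have hqO : q ∈ Vᗮ := Submodule.sub_starProjection_mem_orthogonal (K := V) φ
    have hφpq : φ = p + q := by rw [hq']; abel
    have hpq0 : (inner ℂ p q : ℂ) = 0 := (Submodule.mem_orthogonal V q).mp hqO p hpV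
    have hqp0 : (inner ℂ q p : ℂ) = 0 := by
      rw [← inner_conj_symm, hpq0, map_zero]
    have hpyth : ‖p‖ ^ 2 + ‖q‖ ^ 2 = 1 := by
      have h := norm_add_sq_eq_norm_sq_add_norm_sq_of_inner_eq_zero p q hpq0
      rw [← hφpq, hφ1] at h
      norm_num at h
      linarith [h]
    have hexp : (inner ℂ φ ((A - M) φ) : ℂ) =
        inner ℂ p ((A - M) p) + inner ℂ p ((A - M) q) + inner ℂ q ((A - M) p)
          + inner ℂ q ((A - M) q) := by
      rw [hφpq, map_add, inner_add_left, inner_add_right, inner_add_right]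
      ring
    have hsym : (inner ℂ p ((A - M) q) : ℂ) = (starRingEnd ℂ) (inner ℂ q ((A - M) p) : ℂ) := by
      rw [← hAM p q, inner_conj_symm]
    have hqTp : (inner ℂ q ((A - M) p) : ℂ) = -(inner ℂ q (M p) : ℂ) := by
      have hAp : A p = (E0 : ℂ) • p := Module.End.mem_eigenspace_iff.mp hpV
      rw [LinearMap.sub_apply, inner_sub_right, hAp, inner_smul_right, hqp0]
      ring
    have hcross : |(inner ℂ q (M p) : ℂ).re| ≤ 1/4 * (‖q‖ * ‖p‖) := by
      have h1 : ‖(inner ℂ q (M p) : ℂ)‖ ≤ ‖q‖ * ‖M p‖ := norm_inner_le_norm q (M p)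
      have h2 : |(inner ℂ q (M p) : ℂ).re| ≤ ‖(inner ℂ q (M p) : ℂ)‖ := Complex.abs_re_le_norm _
      have h3 := hMp p hpV
      nlinarith [norm_nonneg q, norm_nonneg (M p), norm_nonneg p]
    have hre : (inner ℂ φ ((A - M) φ) : ℂ).re =
        (inner ℂ p ((A - M) p) : ℂ).re - 2 * (inner ℂ q (M p) : ℂ).re
          + (inner ℂ q ((A - M) q) : ℂ).re := by
      rw [hexp, Complex.add_re, Complex.add_re, Complex.add_re, hsym, hqTp]
      simp only [Complex.conj_re, Complex.neg_re]
      ring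
    have hVlow : (E0 - 1/4) * ‖p‖ ^ 2 ≤ (inner ℂ p ((A - M) p) : ℂ).re := by
      have := hApV p hpV
      have h2 := abs_le.mp (hMpRe p hpV)
      nlinarith
    have hQl := hQlow q hqO
    have hc := abs_le.mp hcross
    have hpn : (0:ℝ) ≤ ‖p‖ := norm_nonneg p
    have hqn : (0:ℝ) ≤ ‖q‖ := norm_nonneg q
    have hE : E0 * ‖p‖ ^ 2 + E0 * ‖q‖ ^ 2 = E0 := by
      have : E0 * (‖p‖ ^ 2 + ‖q‖ ^ 2) = E0 * 1 := by rw [hpyth]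
      linarith [this]
    rw [hre]
    nlinarith [sq_nonneg (‖p‖ - ‖q‖), sq_nonneg ‖q‖, hc.2, hVlow, hQl, hE, hpyth]
  -- dimension bookkeeping
  have hrankO : finrank ℂ V + finrank ℂ (Vᗮ) = n := by
    rw [V.finrank_add_finrank_orthogonal, hn]
  set I : Finset (Fin n) := Finset.univ.filter (fun i => μ i ≤ E0 + 1/4) with hI
  have hdimS : finrank ℂ (Submodule.span ℂ (b '' I)) = I.card := dim_span b I
  -- claim 1 : I.card ≤ n0
  have claim1 : I.card ≤ n0 := by
    have hbot : Submodule.span ℂ (b '' I) ⊓ Vᗮ = ⊥ := by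
      rw [Submodule.eq_bot_iff]
      intro φ hφ
      obtain ⟨hφS, hφO⟩ := Submodule.mem_inf.mp hφ
      by_contra hφ0
      set u := ((‖φ‖ : ℂ))⁻¹ • φ with hu
      have hu1 : ‖u‖ = 1 := unit_of_ne_zero hφ0
      have huS : u ∈ Submodule.span ℂ (b '' I) := Submodule.smul_mem _ _ hφS
      have huO : u ∈ Vᗮ := Submodule.smul_mem _ _ hφO
      have h1 := hQ u huO hu1
      have h2 := rayleigh_le (A - M) hAM hn I (E0 + 1/4)
        (fun i hi => (Finset.mem_filter.mp hi).2) huS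
      rw [hu1, one_pow, mul_one] at h2
      linarith
    have := dim_add_le_of_inf_bot _ _ hbot
    rw [hdimS, hn] at this
    omega
  -- claim 2 : n0 ≤ I.card
  have claim2 : n0 ≤ I.card := by
    set J : Finset (Fin n) := Iᶜ with hJ
    have hbot : V ⊓ Submodule.span ℂ (b '' J) = ⊥ := by
      rw [Submodule.eq_bot_iff]
      intro φ hφ
      obtain ⟨hφV, hφW⟩ := Submodule.mem_inf.mp hφ
      by_contra hφ0
      have hJne : J.Nonempty := by
        by_contra hJe
        rw [Finset.not_nonempty_iff_eq_empty] at hJe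
        rw [hJe] at hφW
        simp only [Finset.coe_empty, Set.image_empty, Submodule.span_empty,
          Submodule.mem_bot] at hφW
        exact hφ0 hφW
      set u := ((‖φ‖ : ℂ))⁻¹ • φ with hu
      have hu1 : ‖u‖ = 1 := unit_of_ne_zero hφ0
      have huV : u ∈ V := Submodule.smul_mem _ _ hφV
      have huW : u ∈ Submodule.span ℂ (b '' J) := Submodule.smul_mem _ _ hφW
      have hJim : (J.image μ).Nonempty := hJne.image μ
      set c := (J.image μ).min' hJim with hc
      have hcle : ∀ i ∈ J, c ≤ μ i := fun i hi =>
        Finset.min'_le _ _ (Finset.mem_image_of_mem μ hi)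
      have hcgt : E0 + 1/4 < c := by
        obtain ⟨j, hjJ, hjc⟩ := Finset.mem_image.mp ((J.image μ).min'_mem hJim)
        have : j ∉ I := Finset.mem_compl.mp hjJ
        rw [hI, Finset.mem_filter] at this
        push_neg at this
        rw [hc, ← hjc]
        exact this (Finset.mem_univ j)
      have h1 := rayleigh_ge (A - M) hAM hn J c hcle huW
      have h2 := hVup u huV
      rw [hu1, one_pow, mul_one] at h1 h2
      linarith
    have := dim_add_le_of_inf_bot _ _ hbot
    rw [dim_span b J, hn0, hn] at this
    have hJcard : (Iᶜ : Finset (Fin n)).card = n - I.card := by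
      rw [Finset.card_compl, Fintype.card_fin]
    have hIle : I.card ≤ n := by
      have := Finset.card_le_univ I
      simpa using this
    rw [hJcard] at this
    omega
  have hcard : I.card = n0 := le_antisymm claim1 claim2
  refine ⟨hcard, ?_, ?_⟩
  · -- dichotomy
    intro i
    by_contra hcon
    push_neg at hcon
    obtain ⟨h1, h2⟩ := hcon
    set I2 : Finset (Fin n) := Finset.univ.filter (fun j => μ j < E0 + 1/2) with hI2
    have hIsub : I ⊂ I2 := by
      constructor
      · intro j hj
        rw [hI, Finset.mem_filter] at hj
        rw [hI2, Finset.mem_filter]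
        exact ⟨hj.1, by linarith [hj.2]⟩
      · intro hsub
        have hiI2 : i ∈ I2 := by
          rw [hI2, Finset.mem_filter]
          exact ⟨Finset.mem_univ i, h2⟩
        have := hsub hiI2
        rw [hI, Finset.mem_filter] at this
        linarith [this.2]
    have hI2card : n0 + 1 ≤ I2.card := by
      have := Finset.card_lt_card hIsub
      omega
    have hne : Submodule.span ℂ (b '' I2) ⊓ Vᗮ ≠ ⊥ := by
      intro hbot
      have := dim_add_le_of_inf_bot _ _ hbot
      rw [dim_span b I2, hn] at this
      omega
    obtain ⟨φ, hφmem, hφ0⟩ := Submodule.ne_bot_iff _ |>.mp hne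
    obtain ⟨hφS, hφO⟩ := Submodule.mem_inf.mp hφmem
    set u := ((‖φ‖ : ℂ))⁻¹ • φ with hu
    have hu1 : ‖u‖ = 1 := unit_of_ne_zero hφ0
    have huS : u ∈ Submodule.span ℂ (b '' I2) := Submodule.smul_mem _ _ hφS
    have huO : u ∈ Vᗮ := Submodule.smul_mem _ _ hφO
    have hq := hQ u huO hu1
    have hI2ne : I2.Nonempty := ⟨i, by rw [hI2, Finset.mem_filter]; exact ⟨Finset.mem_univ i, h2⟩⟩
    have hI2im : (I2.image μ).Nonempty := hI2ne.image μ
    set c := (I2.image μ).max' hI2im with hc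
    have hcle : ∀ j ∈ I2, μ j ≤ c := fun j hj =>
      Finset.le_max' _ _ (Finset.mem_image_of_mem μ hj)
    have hclt : c < E0 + 1/2 := by
      obtain ⟨j, hjI2, hjc⟩ := Finset.mem_image.mp ((I2.image μ).max'_mem hI2im)
      rw [hI2, Finset.mem_filter] at hjI2
      rw [hc, ← hjc]
      exact hjI2.2
    have hray := rayleigh_le (A - M) hAM hn I2 c hcle huS
    rw [hu1, one_pow, mul_one] at hray
    linarith
  · -- global lower bound on eigenvalues
    intro i
    have hTb : (A - M) (b i) = (μ i : ℂ) • b i := hAM.apply_eigenvectorBasis hn i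
    have hbi1 : ‖b i‖ = 1 := b.orthonormal.1 i
    have hval : (inner ℂ (b i) ((A - M) (b i)) : ℂ).re = μ i := by
      rw [hTb, inner_smul_right, Complex.re_ofReal_mul, inner_self_re, hbi1]
      norm_num
    have := hGlobal (b i) hbi1
    rwa [hval] at this
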